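/- arXiv:1704.03668 — 6 statements merged into one kernel-verified Lean document; each statement's English description precedes it below -/
import Mathlib

section
/- Let p ∈ (0,1) and q = 1-p. Then lim_{n→∞} (1/n)·[−Σ_{k=0}^{n-1} 2·C(n,k)·(p^k q^{n-k}/2)·log₂(p^k q^{n-k}/2) − p^n log₂ p^n] = −p log₂ p − q log₂ q, i.e. the Shannon entropy of the spectrum {p^k q^{n-k}/2 with multiplicity 2·C(n,k) for 0 ≤ k ≤ n-1, together with the single value p^n}, divided by n, converges to the binary entropy h(p). -/
/-!
The weights `C(n,k) p^k q^(n-k)`, `0 ≤ k ≤ n`, form the binomial distribution, whose entropy is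
exactly `n h(p)` because its mean is `n p`. Halving the first `n` weights (while doubling their
multiplicity) adds their total mass `1 - p^n` to the entropy, so the spectrum has entropy
`n h(p) + (1 - p^n)`, and dividing by `n` gives the limit `h(p)`.
-/

open Real Filter Finset

theorem sum_range_succ_choose_mul_pow_mul_pow {R : Type*} [CommSemiring R] (x y : R) (n : ℕ) :
    ∑ k ∈ range (n + 1), (n.choose k : R) * (x ^ k * y ^ (n - k)) = (x + y) ^ n := by
  rw [add_pow]
  exact sum_congr rfl fun k _ => by ring

theorem sum_range_succ_mul_choose_mul_pow_mul_pow {R : Type*} [CommSemiring R] (x y : R)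
    (n : ℕ) :
    ∑ k ∈ range (n + 1), (k : R) * n.choose k * (x ^ k * y ^ (n - k)) =
      n * x * (x + y) ^ (n - 1) := by
  cases n with
  | zero => simp
  | succ m =>
    have hterm (i : ℕ) :
        ((i + 1 : ℕ) : R) * (m + 1).choose (i + 1) * (x ^ (i + 1) * y ^ (m + 1 - (i + 1))) =
          (m + 1) * x * (m.choose i * (x ^ i * y ^ (m - i))) := by
      have h : ((i + 1 : ℕ) : R) * (m + 1).choose (i + 1) = (m + 1) * m.choose i := by
        have := congrArg (Nat.cast : ℕ → R) (Nat.add_one_mul_choose_eq m i)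
        push_cast at this ⊢
        rw [mul_comm, ← this]
      calc _ = ((i + 1 : ℕ) : R) * (m + 1).choose (i + 1) * x * (x ^ i * y ^ (m - i)) := by
            rw [Nat.add_sub_add_right]; ring
        _ = _ := by rw [h]; ring
    rw [sum_range_succ', sum_congr rfl fun i _ => hterm i, ← mul_sum,
      sum_range_succ_choose_mul_pow_mul_pow]
    simp

theorem binomial_sum_mul_logb_eq (b : ℝ) {p q : ℝ} (hp : p ≠ 0) (hq : q ≠ 0) (hpq : p + q = 1)
    (n : ℕ) :
    ∑ k ∈ range (n + 1), (n.choose k : ℝ) * (p ^ k * q ^ (n - k)) * logb b (p ^ k * q ^ (n - k)) =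
      n * (p * logb b p + q * logb b q) := by
  have hterm : ∀ k ∈ range (n + 1),
      (n.choose k : ℝ) * (p ^ k * q ^ (n - k)) * logb b (p ^ k * q ^ (n - k)) =
        logb b p * (k * n.choose k * (p ^ k * q ^ (n - k))) +
          logb b q * (n * (n.choose k * (p ^ k * q ^ (n - k)))) -
          logb b q * (k * n.choose k * (p ^ k * q ^ (n - k))) := by
    intro k hk
    rw [logb_mul (pow_ne_zero _ hp) (pow_ne_zero _ hq), logb_pow, logb_pow,
      Nat.cast_sub (Nat.lt_succ_iff.mp (mem_range.mp hk))]
    ring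
  have hmass := sum_range_succ_choose_mul_pow_mul_pow p q n
  rw [hpq, one_pow] at hmass
  rw [sum_congr rfl hterm, sum_sub_distrib, sum_add_distrib, ← mul_sum, ← mul_sum, ← mul_sum,
    ← mul_sum, hmass, sum_range_succ_mul_choose_mul_pow_mul_pow, hpq, one_pow,
    eq_sub_of_add_eq' hpq]
  ring

theorem entropy_binomial_spectrum_eq {p q : ℝ} (hp : p ≠ 0) (hq : q ≠ 0) (hpq : p + q = 1)
    (n : ℕ) :
    -(∑ k ∈ range n,
        2 * (n.choose k : ℝ) * (p ^ k * q ^ (n - k) / 2) * logb 2 (p ^ k * q ^ (n - k) / 2))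
      - p ^ n * logb 2 (p ^ n) =
      n * (-(p * logb 2 p) - q * logb 2 q) + (1 - p ^ n) := by
  have halve : ∀ k ∈ range n,
      2 * (n.choose k : ℝ) * (p ^ k * q ^ (n - k) / 2) * logb 2 (p ^ k * q ^ (n - k) / 2) =
        (n.choose k : ℝ) * (p ^ k * q ^ (n - k)) * logb 2 (p ^ k * q ^ (n - k)) -
          (n.choose k : ℝ) * (p ^ k * q ^ (n - k)) := by
    intro k _
    rw [logb_div (by positivity) two_ne_zero, logb_self_eq_one one_lt_two]
    ring
  have hentropy := binomial_sum_mul_logb_eq 2 hp hq hpq n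
  have hmass := sum_range_succ_choose_mul_pow_mul_pow p q n
  rw [hpq, one_pow] at hmass
  rw [sum_range_succ, Nat.choose_self, Nat.sub_self] at hentropy hmass
  rw [sum_congr rfl halve, sum_sub_distrib]
  simp only [Nat.cast_one, pow_zero, mul_one, one_mul] at hentropy hmass
  linarith

theorem entropy_rate_binomial_spectrum (p q : ℝ) (hp : p ∈ Set.Ioo (0:ℝ) 1) (hq : q = 1 - p) :
    Tendsto (fun n : ℕ =>
      (-(∑ k ∈ Finset.range n,
          2 * (n.choose k : ℝ) * (p^k * q^(n-k) / 2) * Real.logb 2 (p^k * q^(n-k) / 2))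
        - p^n * Real.logb 2 (p^n)) / n)
      atTop (nhds (-(p * Real.logb 2 p) - q * Real.logb 2 q)) := by
  obtain ⟨hp0, hp1⟩ := hp
  have hpq : p + q = 1 := by rw [hq]; ring
  have hq0 : q ≠ 0 := by rw [hq]; linarith
  have hremainder : Tendsto (fun n : ℕ => (1 - p ^ n) / n) atTop (nhds 0) :=
    ((tendsto_pow_atTop_nhds_zero_of_lt_one hp0.le hp1).const_sub 1).div_atTop
      tendsto_natCast_atTop_atTop
  have hlim := (tendsto_const_nhds (x := -(p * logb 2 p) - q * logb 2 q)).add hremainder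
  rw [add_zero] at hlim
  refine hlim.congr' ?_
  filter_upwards [eventually_ne_atTop 0] with n hn
  rw [entropy_binomial_spectrum_eq hp0.ne' hq0 hpq n]
  field_simp
end

section
/- The quantum capacity of the memory channel correlated by the parametrized AKLT state is Q = log₂ 3 − h₂(θ), where h₂(θ) = −sin²(θ)log₂(sin²θ) − cos²(θ)log₂(cos²θ); equivalently, with λ_p = sin^{2p}(θ)cos^{2(n-p)}(θ)/2 for 0 ≤ p ≤ n-1 (multiplicity 2·C(n,p)) and λ_n = sin^{2n}(θ) (multiplicity 1), one has lim_{n→∞} (1/n)·(−Σ λ log₂ λ over this multiset) = h₂(θ), assuming sin²θ ∈ (0,1). -/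
/-!
Put `x = sin²θ`, so `cos²θ = 1 - x`. The AKLT spectrum is the binomial spectrum
`xᵖ (1 - x)ⁿ⁻ᵖ` (multiplicity `C(n,p)`) in which every eigenvalue with `p < n` is split into two
equal halves. The binomial spectrum has entropy `n · h(x)` (additivity of entropy over `n`
independent Bernoulli trials), and halving costs one bit per unit of the weight `1 - xⁿ` that is
split, so the diagonal entropy is exactly `n · h₂(θ) + 1 - xⁿ`; dividing by `n` gives the limit.
Written with `negMulLog`, these identities need no case split on vanishing eigenvalues.
-/

open Real Filter Finset

theorem sum_choose_mul_pow_mul_one_sub_pow {R : Type*} [CommRing R] (x : R) (n : ℕ) :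
    ∑ p ∈ range (n + 1), (n.choose p : R) * (x ^ p * (1 - x) ^ (n - p)) = 1 := by
  simpa [bernsteinPolynomial, mul_assoc, Polynomial.eval_finsetSum] using
    congrArg (Polynomial.eval x) (bernsteinPolynomial.sum R n)

theorem sum_mul_choose_mul_pow_mul_one_sub_pow {R : Type*} [CommRing R] (x : R) (n : ℕ) :
    ∑ p ∈ range (n + 1), (p : R) * ((n.choose p : R) * (x ^ p * (1 - x) ^ (n - p))) = n * x := by
  simpa [bernsteinPolynomial, mul_assoc, nsmul_eq_mul, Polynomial.eval_finsetSum] using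
    congrArg (Polynomial.eval x) (bernsteinPolynomial.sum_smul R n)

theorem negMulLog_pow_mul_pow (x y : ℝ) (k l : ℕ) :
    negMulLog (x ^ k * y ^ l) = -(x ^ k * y ^ l) * (k * log x + l * log y) := by
  rw [negMulLog_mul]
  simp only [negMulLog, log_pow]
  ring

theorem sum_choose_mul_negMulLog_pow_mul_one_sub_pow (x : ℝ) (n : ℕ) :
    ∑ p ∈ range (n + 1), (n.choose p : ℝ) * negMulLog (x ^ p * (1 - x) ^ (n - p))
      = n * binEntropy x := by
  set w : ℕ → ℝ := fun p ↦ (n.choose p : ℝ) * (x ^ p * (1 - x) ^ (n - p))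
  have hterm : ∀ p ∈ range (n + 1),
      (n.choose p : ℝ) * negMulLog (x ^ p * (1 - x) ^ (n - p))
        = -log x * (p * w p) - log (1 - x) * (n * w p - p * w p) := by
    intro p hp
    rw [negMulLog_pow_mul_pow, Nat.cast_sub (mem_range_succ_iff.mp hp)]
    ring
  rw [sum_congr rfl hterm, sum_sub_distrib, ← mul_sum, ← mul_sum, sum_sub_distrib, ← mul_sum,
    sum_choose_mul_pow_mul_one_sub_pow, sum_mul_choose_mul_pow_mul_one_sub_pow,
    binEntropy_eq_negMulLog_add_negMulLog_one_sub, negMulLog, negMulLog]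
  ring

theorem two_mul_negMulLog_half (w : ℝ) : 2 * negMulLog (w / 2) = negMulLog w + w * log 2 := by
  rw [div_eq_mul_inv, negMulLog_mul]
  simp only [negMulLog, log_inv]
  ring

theorem mul_logb_eq_neg_negMulLog_div (b a : ℝ) : a * logb b a = -negMulLog a / log b := by
  rw [logb, negMulLog]
  ring

theorem aklt_entropy_eq (x : ℝ) (n : ℕ) :
    -(∑ p ∈ range n, 2 * (n.choose p : ℝ) * (x ^ p * (1 - x) ^ (n - p) / 2)
        * logb 2 (x ^ p * (1 - x) ^ (n - p) / 2)) - x ^ n * logb 2 (x ^ n)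
      = n * binEntropy x / log 2 + (1 - x ^ n) := by
  have hterm : ∀ p ∈ range n, 2 * (n.choose p : ℝ) * (x ^ p * (1 - x) ^ (n - p) / 2)
        * logb 2 (x ^ p * (1 - x) ^ (n - p) / 2)
      = -((n.choose p : ℝ) * negMulLog (x ^ p * (1 - x) ^ (n - p)) / log 2
          + (n.choose p : ℝ) * (x ^ p * (1 - x) ^ (n - p))) := by
    intro p _
    have hlog2 : log 2 ≠ 0 := by positivity
    rw [mul_assoc, mul_logb_eq_neg_negMulLog_div]
    field_simp
    linear_combination (-(n.choose p : ℝ)) * two_mul_negMulLog_half (x ^ p * (1 - x) ^ (n - p))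
  have hentropy := sum_choose_mul_negMulLog_pow_mul_one_sub_pow x n
  have htotal := sum_choose_mul_pow_mul_one_sub_pow x n
  rw [sum_range_succ] at hentropy htotal
  simp only [Nat.choose_self, Nat.cast_one, Nat.sub_self, pow_zero, mul_one, one_mul]
    at hentropy htotal
  rw [sum_congr rfl hterm, sum_neg_distrib, neg_neg, sum_add_distrib, ← sum_div,
    mul_logb_eq_neg_negMulLog_div]
  linear_combination hentropy / log 2 + htotal

theorem tendsto_one_sub_pow_div_atTop {x : ℝ} (hx₀ : 0 ≤ x) (hx₁ : x ≤ 1) :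
    Tendsto (fun n : ℕ ↦ (1 - x ^ n) / n) atTop (nhds 0) := by
  refine tendsto_of_tendsto_of_tendsto_of_le_of_le tendsto_const_nhds
    tendsto_one_div_atTop_nhds_zero_nat (fun n ↦ ?_) (fun n ↦ ?_)
  · have := pow_le_one₀ hx₀ hx₁ (n := n)
    positivity
  · gcongr
    linarith [pow_nonneg hx₀ n]

theorem aklt_capacity_general (θ : ℝ) :
    Tendsto (fun n : ℕ =>
      (-(∑ p ∈ Finset.range n,
          2 * (n.choose p : ℝ) * (Real.sin θ ^ (2*p) * Real.cos θ ^ (2*(n-p)) / 2)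
            * Real.logb 2 (Real.sin θ ^ (2*p) * Real.cos θ ^ (2*(n-p)) / 2))
        - Real.sin θ ^ (2*n) * Real.logb 2 (Real.sin θ ^ (2*n))) / n)
      atTop
      (nhds (-(Real.sin θ ^ 2 * Real.logb 2 (Real.sin θ ^ 2))
              - Real.cos θ ^ 2 * Real.logb 2 (Real.cos θ ^ 2))) := by
  have hx₀ : 0 ≤ sin θ ^ 2 := sq_nonneg _
  have hx₁ : sin θ ^ 2 ≤ 1 := sin_sq_le_one θ
  simp only [pow_mul, cos_sq']
  set x := sin θ ^ 2
  have hlimit : -(x * logb 2 x) - (1 - x) * logb 2 (1 - x) = binEntropy x / log 2 := by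
    rw [mul_logb_eq_neg_negMulLog_div, mul_logb_eq_neg_negMulLog_div,
      binEntropy_eq_negMulLog_add_negMulLog_one_sub]
    ring
  rw [hlimit]
  have hshifted : Tendsto (fun n : ℕ ↦ binEntropy x / log 2 + (1 - x ^ n) / n) atTop
      (nhds (binEntropy x / log 2)) := by
    simpa using (tendsto_one_sub_pow_div_atTop hx₀ hx₁).const_add (binEntropy x / log 2)
  refine hshifted.congr' ?_
  filter_upwards [eventually_ne_atTop 0] with n hn
  rw [aklt_entropy_eq]
  field_simp

/-- Capacity of the channel correlated by the parametrized AKLT state: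
`Q = log₂ 3 − h₂(θ)`, where the diagonal entropy rate of the AKLT spectrum
`λ_p = sin^{2p}θ cos^{2(n−p)}θ / 2` (multiplicity `2·C(n,p)`, `0 ≤ p ≤ n−1`) together with
`λ_n = sin^{2n}θ` converges to the binary entropy `h₂(θ)`. -/
theorem aklt_capacity (θ : ℝ) (h : Real.sin θ ^ 2 ∈ Set.Ioo (0:ℝ) 1) :
    Tendsto (fun n : ℕ =>
      (-(∑ p ∈ Finset.range n,
          2 * (n.choose p : ℝ) * (Real.sin θ ^ (2*p) * Real.cos θ ^ (2*(n-p)) / 2)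
            * Real.logb 2 (Real.sin θ ^ (2*p) * Real.cos θ ^ (2*(n-p)) / 2))
        - Real.sin θ ^ (2*n) * Real.logb 2 (Real.sin θ ^ (2*n))) / n)
      atTop
      (nhds (-(Real.sin θ ^ 2 * Real.logb 2 (Real.sin θ ^ 2))
              - Real.cos θ ^ 2 * Real.logb 2 (Real.cos θ ^ 2))) :=
  aklt_capacity_general θ
end

section
/- For every n ≥ 4 and every word O1,…,On over {A1,A2} (Majumdar–Ghosh operators), the matrix O1⋯On·On†⋯O1† is diagonal, and belongs to the explicit set {diag(0,0,0), diag(g^{⌊n/2⌋},0,0), diag(g^i(1−g)^{⌊n/2⌋−i},0,0) for 1≤i≤⌊n/2⌋−1, diag((1−g)^{⌊n/2⌋}, g^{⌈n/2⌉}, 0), diag(0, g^i(1−g)^{⌈n/2⌉−i}, 0) for 1≤i≤⌈n/2⌉−1, diag(0, (1−g)^{⌈n/2⌉}, g^{⌊n/2⌋}), diag(0,0,g^{⌊n/2⌋−i}(1−g)^i) for 1≤i≤⌊n/2⌋−1, diag(0,0,(1−g)^{⌊n/2⌋})}. -/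
open Matrix Real

noncomputable def B1 (g : ℝ) : Matrix (Fin 3) (Fin 3) ℝ :=
  !![0, 1, 0; 0, 0, -Real.sqrt g; 0, 0, 0]

noncomputable def B2 (g : ℝ) : Matrix (Fin 3) (Fin 3) ℝ :=
  !![0, 0, 0; Real.sqrt (1 - g), 0, 0; 0, 1, 0]

def sm (r j : Fin 3) (c : ℝ) : Matrix (Fin 3) (Fin 3) ℝ :=
  Matrix.of fun i i' => if i = r ∧ i' = j then c else 0

lemma sm_mul_B1_j0 (g : ℝ) (r : Fin 3) (c : ℝ) : sm r 0 c * B1 g = sm r 1 c := by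
  ext i i'
  fin_cases i' <;> simp [sm, B1, Matrix.mul_apply, Fin.sum_univ_three]

lemma sm_mul_B1_j1 (g : ℝ) (r : Fin 3) (c : ℝ) :
    sm r 1 c * B1 g = sm r 2 (c * (-Real.sqrt g)) := by
  ext i i'
  fin_cases i' <;> simp [sm, B1, Matrix.mul_apply, Fin.sum_univ_three]

lemma sm_mul_B1_j2 (g : ℝ) (r : Fin 3) (c : ℝ) : sm r 2 c * B1 g = 0 := by
  ext i i'
  fin_cases i' <;>
    simp [sm, B1, Matrix.mul_apply, Fin.sum_univ_three, ite_and] <;> aesop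

lemma sm_mul_B2_j0 (g : ℝ) (r : Fin 3) (c : ℝ) : sm r 0 c * B2 g = 0 := by
  ext i i'
  fin_cases i' <;>
    simp [sm, B2, Matrix.mul_apply, Fin.sum_univ_three, ite_and] <;> aesop

lemma sm_mul_B2_j1 (g : ℝ) (r : Fin 3) (c : ℝ) :
    sm r 1 c * B2 g = sm r 0 (c * Real.sqrt (1-g)) := by
  ext i i'
  fin_cases i' <;> simp [sm, B2, Matrix.mul_apply, Fin.sum_univ_three]

lemma sm_mul_B2_j2 (g : ℝ) (r : Fin 3) (c : ℝ) : sm r 2 c * B2 g = sm r 1 c := by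
  ext i i'
  fin_cases i' <;> simp [sm, B2, Matrix.mul_apply, Fin.sum_univ_three]

lemma sm_conj (r j : Fin 3) (c : ℝ) : (sm r j c)ᴴ = sm j r c := by
  ext i i'
  simp [sm, Matrix.conjTranspose_apply, and_comm]

lemma sm_mul_sm_same (r j q : Fin 3) (c d : ℝ) :
    sm r j c * sm j q d = sm r q (c * d) := by
  ext i i'
  fin_cases j <;>
    simp [sm, Matrix.mul_apply, Fin.sum_univ_three, ite_and] <;> aesop

lemma sm_mul_sm_ne (r j p q : Fin 3) (c d : ℝ) (h : j ≠ p) :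
    sm r j c * sm p q d = 0 := by
  ext i i'
  fin_cases j <;> fin_cases p <;> simp_all [sm, Matrix.mul_apply, Fin.sum_univ_three]

lemma sm_diag0 (x : ℝ) : sm 0 0 x = Matrix.diagonal ![x,0,0] := by
  ext i i'; fin_cases i <;> fin_cases i' <;> simp [sm, Matrix.diagonal]

lemma sm_diag1 (x : ℝ) : sm 1 1 x = Matrix.diagonal ![0,x,0] := by
  ext i i'; fin_cases i <;> fin_cases i' <;> simp [sm, Matrix.diagonal]

lemma sm_diag2 (x : ℝ) : sm 2 2 x = Matrix.diagonal ![0,0,x] := by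
  ext i i'; fin_cases i <;> fin_cases i' <;> simp [sm, Matrix.diagonal]

lemma sm_add_diag01 (x y : ℝ) : sm 0 0 x + sm 1 1 y = Matrix.diagonal ![x,y,0] := by
  ext i i'; fin_cases i <;> fin_cases i' <;> simp [sm, Matrix.diagonal]

lemma sm_add_diag12 (x y : ℝ) : sm 1 1 x + sm 2 2 y = Matrix.diagonal ![0,x,y] := by
  ext i i'; fin_cases i <;> fin_cases i' <;> simp [sm, Matrix.diagonal]

lemma B1_eq (g : ℝ) : B1 g = sm 0 1 1 + sm 1 2 (-Real.sqrt g) := by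
  ext i i'; fin_cases i <;> fin_cases i' <;> simp [sm, B1, Matrix.vecHead, Matrix.vecTail]

lemma B2_eq (g : ℝ) : B2 g = sm 1 0 (Real.sqrt (1-g)) + sm 2 1 1 := by
  ext i i'; fin_cases i <;> fin_cases i' <;> simp [sm, B2, Matrix.vecHead, Matrix.vecTail]

lemma fin3_cases (j : Fin 3) : j = 0 ∨ j = 1 ∨ j = 2 := by fin_cases j <;> simp

lemma pow_sq_u (g : ℝ) (h : (0:ℝ) ≤ 1 - g) (m : ℕ) :
    (Real.sqrt (1-g) ^ m)^2 = (1-g)^m := by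
  rw [← pow_mul, mul_comm, pow_mul, Real.sq_sqrt h]

lemma pow_sq_v (g : ℝ) (h : 0 ≤ g) (m : ℕ) : ((-Real.sqrt g) ^ m)^2 = g^m := by
  rw [← pow_mul, mul_comm, pow_mul, neg_sq, Real.sq_sqrt h]

lemma two_mul_conj (p q p' q' : Fin 3) (hq : q ≠ q') (x y : ℝ) :
    (sm p q x + sm p' q' y) * (sm p q x + sm p' q' y)ᴴ
      = sm p p (x*x) + sm p' p' (y*y) := by
  rw [conjTranspose_add, sm_conj, sm_conj, add_mul, mul_add, mul_add,
      sm_mul_sm_same, sm_mul_sm_same, sm_mul_sm_ne _ _ _ _ _ _ hq,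
      sm_mul_sm_ne _ _ _ _ _ _ hq.symm]
  simp

lemma single_mul_conj (r j : Fin 3) (c : ℝ) :
    (sm r j c) * (sm r j c)ᴴ = sm r r (c*c) := by
  rw [sm_conj, sm_mul_sm_same]
inductive MGInv (g : ℝ) : ℕ → Matrix (Fin 3) (Fin 3) ℝ → Prop
  | zero (k : ℕ) : MGInv g k 0
  | id : MGInv g 0 1
  | Aeven (k : ℕ) (hk : Even k) (h0 : k ≠ 0) :
      MGInv g k (sm 0 0 (Real.sqrt (1-g) ^ (k/2)) + sm 1 1 ((-Real.sqrt g) ^ (k/2)))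
  | Aodd (k : ℕ) (hk : Odd k) :
      MGInv g k (sm 1 0 (Real.sqrt (1-g) ^ ((k+1)/2)) + sm 2 1 ((-Real.sqrt g) ^ (k/2)))
  | Beven (k : ℕ) (hk : Even k) (h0 : k ≠ 0) :
      MGInv g k (sm 1 1 (Real.sqrt (1-g) ^ (k/2)) + sm 2 2 ((-Real.sqrt g) ^ (k/2)))
  | Bodd (k : ℕ) (hk : Odd k) :
      MGInv g k (sm 0 1 (Real.sqrt (1-g) ^ (k/2)) + sm 1 2 ((-Real.sqrt g) ^ ((k+1)/2)))
  | single (k : ℕ) (r j : Fin 3) (c : ℝ) (a b : ℕ)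
      (hc : c^2 = g^a * (1-g)^b)
      (h1 : r = 1 → a + b = (k+1)/2 ∧ 1 ≤ a ∧ 1 ≤ b)
      (h2 : r ≠ 1 → a + b = k/2)
      (h3 : r = 0 → 1 ≤ a) (h4 : r = 2 → 1 ≤ b)
      (h5 : (j = 1) ↔ (if r = 1 then Even k else Odd k)) :
      MGInv g k (sm r j c)

lemma stepB1 {g : ℝ} (hg : g ∈ Set.Ico (0:ℝ) 1) {k : ℕ} {M : Matrix (Fin 3) (Fin 3) ℝ}
    (h : MGInv g k M) : MGInv g (k+1) (M * B1 g) := by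
  have hg0 : (0:ℝ) ≤ g := hg.1
  have hg1 : (0:ℝ) ≤ 1 - g := by linarith [hg.2]
  cases h with
  | zero k => rw [zero_mul]; exact MGInv.zero _
  | id =>
      rw [one_mul, B1_eq]
      have h := MGInv.Bodd (g := g) 1 odd_one
      norm_num at h
      exact h
  | Aeven k hk h0 =>
      have hk2 : k % 2 = 0 := Nat.even_iff.mp hk
      rw [add_mul, sm_mul_B1_j0, sm_mul_B1_j1, ← pow_succ,
        show k/2 + 1 = ((k+1)+1)/2 by omega, show k/2 = (k+1)/2 by omega]
      exact MGInv.Bodd (k+1) (by rw [Nat.odd_iff]; omega)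
  | Aodd k hk =>
      have hk2 : k % 2 = 1 := Nat.odd_iff.mp hk
      rw [add_mul, sm_mul_B1_j0, sm_mul_B1_j1, ← pow_succ,
        show k/2 + 1 = (k+1)/2 by omega]
      exact MGInv.Beven (k+1) (by rw [Nat.even_iff]; omega) (by omega)
  | Beven k hk h0 =>
      have hk2 : k % 2 = 0 := Nat.even_iff.mp hk
      rw [add_mul, sm_mul_B1_j1, sm_mul_B1_j2, add_zero]
      refine MGInv.single (k+1) 1 2 _ 1 (k/2) ?_ (fun _ => ⟨by omega, le_refl 1, by omega⟩)
        (fun hr => absurd rfl hr) (fun hr => absurd hr (by decide))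
        (fun hr => absurd hr (by decide)) ?_
      · rw [mul_pow, pow_sq_u g hg1, neg_sq, Real.sq_sqrt hg0, pow_one, mul_comm]
      · simp only [if_pos rfl]
        constructor
        · intro hj; exact absurd hj (by decide)
        · intro he; exact absurd (Nat.even_iff.mp he) (by omega)
  | Bodd k hk =>
      have hk2 : k % 2 = 1 := Nat.odd_iff.mp hk
      rw [add_mul, sm_mul_B1_j1, sm_mul_B1_j2, add_zero]
      refine MGInv.single (k+1) 0 2 _ 1 (k/2) ?_
        (fun hr => absurd hr (by decide)) (fun _ => by omega)
        (fun _ => le_refl 1) (fun hr => absurd hr (by decide)) ?_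
      · rw [mul_pow, pow_sq_u g hg1, neg_sq, Real.sq_sqrt hg0, pow_one, mul_comm]
      · rw [if_neg (by decide)]
        constructor
        · intro hj; exact absurd hj (by decide)
        · intro he; exact absurd (Nat.odd_iff.mp he) (by omega)
  | single k r j c a b hc h1 h2 h3 h4 h5 =>
      rcases fin3_cases j with hj | hj | hj <;> subst hj
      · -- j = 0
        rw [sm_mul_B1_j0]
        have hj5 : ¬ (if r = 1 then Even k else Odd k) := by
          rw [← h5]; decide
        by_cases hr : r = 1
        · rw [if_pos hr] at hj5
          have hk2 : k % 2 = 1 := by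
            rcases Nat.even_or_odd k with he | ho
            · exact absurd he hj5
            · exact Nat.odd_iff.mp ho
          obtain ⟨ht, ha, hb⟩ := h1 hr
          refine MGInv.single (k+1) r 1 c a b hc (fun _ => ⟨by omega, ha, hb⟩)
            (fun h' => absurd hr h') h3 h4 ?_
          rw [if_pos hr]
          simp only [true_iff]
          rw [Nat.even_iff]; omega
        · rw [if_neg hr] at hj5
          have hk2 : k % 2 = 0 := by
            rcases Nat.even_or_odd k with he | ho
            · exact Nat.even_iff.mp he
            · exact absurd ho hj5
          have ht := h2 hr
          refine MGInv.single (k+1) r 1 c a b hc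
            (fun h' => absurd h' hr) (fun _ => by omega) h3 h4 ?_
          rw [if_neg hr]
          simp only [true_iff]
          rw [Nat.odd_iff]; omega
      · -- j = 1
        rw [sm_mul_B1_j1]
        have hc' : (c * -Real.sqrt g)^2 = g^(a+1) * (1-g)^b := by
          rw [mul_pow, hc, neg_sq, Real.sq_sqrt hg0]; ring
        have hj5 : (if r = 1 then Even k else Odd k) := h5.mp rfl
        by_cases hr : r = 1
        · rw [if_pos hr] at hj5
          have hk2 : k % 2 = 0 := Nat.even_iff.mp hj5
          obtain ⟨ht, ha, hb⟩ := h1 hr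
          refine MGInv.single (k+1) r 2 _ (a+1) b hc' (fun _ => ⟨by omega, by omega, hb⟩)
            (fun h' => absurd hr h') (fun _ => by omega) h4 ?_
          rw [if_pos hr]
          constructor
          · intro hj; exact absurd hj (by decide)
          · intro he; exact absurd (Nat.even_iff.mp he) (by omega)
        · rw [if_neg hr] at hj5
          have hk2 : k % 2 = 1 := Nat.odd_iff.mp hj5
          have ht := h2 hr
          refine MGInv.single (k+1) r 2 _ (a+1) b hc' (fun h' => absurd h' hr)
            (fun _ => by omega) (fun _ => by omega) h4 ?_
          rw [if_neg hr]
          constructor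
          · intro hj; exact absurd hj (by decide)
          · intro he; exact absurd (Nat.odd_iff.mp he) (by omega)
      · rw [sm_mul_B1_j2]; exact MGInv.zero _
lemma stepB2 {g : ℝ} (hg : g ∈ Set.Ico (0:ℝ) 1) {k : ℕ} {M : Matrix (Fin 3) (Fin 3) ℝ}
    (h : MGInv g k M) : MGInv g (k+1) (M * B2 g) := by
  have hg0 : (0:ℝ) ≤ g := hg.1
  have hg1 : (0:ℝ) ≤ 1 - g := by linarith [hg.2]
  cases h with
  | zero k => rw [zero_mul]; exact MGInv.zero _
  | id =>
      rw [one_mul, B2_eq]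
      have h := MGInv.Aodd (g := g) 1 odd_one
      norm_num at h
      exact h
  | Aeven k hk h0 =>
      have hk2 : k % 2 = 0 := Nat.even_iff.mp hk
      rw [add_mul, sm_mul_B2_j0, sm_mul_B2_j1, zero_add]
      refine MGInv.single (k+1) 1 0 _ (k/2) 1 ?_ (fun _ => ⟨by omega, by omega, le_refl 1⟩)
        (fun hr => absurd rfl hr) (fun hr => absurd hr (by decide))
        (fun hr => absurd hr (by decide)) ?_
      · rw [mul_pow, pow_sq_v g hg0, Real.sq_sqrt hg1, pow_one]
      · rw [if_pos rfl]
        constructor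
        · intro hj; exact absurd hj (by decide)
        · intro he; exact absurd (Nat.even_iff.mp he) (by omega)
  | Aodd k hk =>
      have hk2 : k % 2 = 1 := Nat.odd_iff.mp hk
      rw [add_mul, sm_mul_B2_j0, sm_mul_B2_j1, zero_add]
      refine MGInv.single (k+1) 2 0 _ (k/2) 1 ?_
        (fun hr => absurd hr (by decide)) (fun _ => by omega)
        (fun hr => absurd hr (by decide)) (fun _ => le_refl 1) ?_
      · rw [mul_pow, pow_sq_v g hg0, Real.sq_sqrt hg1, pow_one]
      · rw [if_neg (by decide)]
        constructor
        · intro hj; exact absurd hj (by decide)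
        · intro he; exact absurd (Nat.odd_iff.mp he) (by omega)
  | Beven k hk h0 =>
      have hk2 : k % 2 = 0 := Nat.even_iff.mp hk
      rw [add_mul, sm_mul_B2_j1, sm_mul_B2_j2, ← pow_succ,
        show k/2 + 1 = ((k+1)+1)/2 by omega, show k/2 = (k+1)/2 by omega]
      exact MGInv.Aodd (k+1) (by rw [Nat.odd_iff]; omega)
  | Bodd k hk =>
      have hk2 : k % 2 = 1 := Nat.odd_iff.mp hk
      rw [add_mul, sm_mul_B2_j1, sm_mul_B2_j2, ← pow_succ,
        show k/2 + 1 = (k+1)/2 by omega]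
      exact MGInv.Aeven (k+1) (by rw [Nat.even_iff]; omega) (by omega)
  | single k r j c a b hc h1 h2 h3 h4 h5 =>
      rcases fin3_cases j with hj | hj | hj <;> subst hj
      · rw [sm_mul_B2_j0]; exact MGInv.zero _
      · -- j = 1
        rw [sm_mul_B2_j1]
        have hc' : (c * Real.sqrt (1-g))^2 = g^a * (1-g)^(b+1) := by
          rw [mul_pow, hc, Real.sq_sqrt hg1]; ring
        have hj5 : (if r = 1 then Even k else Odd k) := h5.mp rfl
        by_cases hr : r = 1
        · rw [if_pos hr] at hj5
          have hk2 : k % 2 = 0 := Nat.even_iff.mp hj5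
          obtain ⟨ht, ha, hb⟩ := h1 hr
          refine MGInv.single (k+1) r 0 _ a (b+1) hc' (fun _ => ⟨by omega, ha, by omega⟩)
            (fun h' => absurd hr h') h3 (fun _ => by omega) ?_
          rw [if_pos hr]
          constructor
          · intro hj; exact absurd hj (by decide)
          · intro he; exact absurd (Nat.even_iff.mp he) (by omega)
        · rw [if_neg hr] at hj5
          have hk2 : k % 2 = 1 := Nat.odd_iff.mp hj5
          have ht := h2 hr
          refine MGInv.single (k+1) r 0 _ a (b+1) hc' (fun h' => absurd h' hr)
            (fun _ => by omega) h3 (fun _ => by omega) ?_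
          rw [if_neg hr]
          constructor
          · intro hj; exact absurd hj (by decide)
          · intro he; exact absurd (Nat.odd_iff.mp he) (by omega)
      · -- j = 2
        rw [sm_mul_B2_j2]
        have hj5 : ¬ (if r = 1 then Even k else Odd k) := by
          rw [← h5]; decide
        by_cases hr : r = 1
        · rw [if_pos hr] at hj5
          have hk2 : k % 2 = 1 := by
            rcases Nat.even_or_odd k with he | ho
            · exact absurd he hj5
            · exact Nat.odd_iff.mp ho
          obtain ⟨ht, ha, hb⟩ := h1 hr
          refine MGInv.single (k+1) r 1 c a b hc (fun _ => ⟨by omega, ha, hb⟩)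
            (fun h' => absurd hr h') h3 h4 ?_
          rw [if_pos hr]
          simp only [true_iff]
          rw [Nat.even_iff]; omega
        · rw [if_neg hr] at hj5
          have hk2 : k % 2 = 0 := by
            rcases Nat.even_or_odd k with he | ho
            · exact Nat.even_iff.mp he
            · exact absurd ho hj5
          have ht := h2 hr
          refine MGInv.single (k+1) r 1 c a b hc
            (fun h' => absurd h' hr) (fun _ => by omega) h3 h4 ?_
          rw [if_neg hr]
          simp only [true_iff]
          rw [Nat.odd_iff]; omega

lemma inv_prod {g : ℝ} (hg : g ∈ Set.Ico (0:ℝ) 1) (l : List (Matrix (Fin 3) (Fin 3) ℝ))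
    (h : ∀ A ∈ l, A = B1 g ∨ A = B2 g) : MGInv g l.length l.prod := by
  induction l using List.reverseRecOn with
  | nil => simpa using MGInv.id (g := g)
  | append_singleton l a ih =>
      have hl := ih (fun A hA => h A (by simp [hA]))
      have ha := h a (by simp)
      rw [List.prod_append, List.prod_singleton, List.length_append]
      simp only [List.length_singleton]
      rcases ha with ha | ha <;> rw [ha]
      · exact stepB1 hg hl
      · exact stepB2 hg hl
lemma final (g : ℝ) (hg : g ∈ Set.Ico (0:ℝ) 1) (n : ℕ) (hn : 4 ≤ n)
    (P : Matrix (Fin 3) (Fin 3) ℝ) (h : MGInv g n P) :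
    (P * Pᴴ).IsDiag ∧
    (P * Pᴴ = 0
    ∨ P * Pᴴ = Matrix.diagonal ![g^(n/2), 0, 0]
    ∨ (∃ i, 1 ≤ i ∧ i ≤ n/2 - 1 ∧
        P * Pᴴ = Matrix.diagonal ![g^i * (1-g)^(n/2 - i), 0, 0])
    ∨ P * Pᴴ = Matrix.diagonal ![(1-g)^(n/2), g^((n+1)/2), 0]
    ∨ (∃ i, 1 ≤ i ∧ i ≤ (n+1)/2 - 1 ∧
        P * Pᴴ = Matrix.diagonal ![0, g^i * (1-g)^((n+1)/2 - i), 0])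
    ∨ P * Pᴴ = Matrix.diagonal ![0, (1-g)^((n+1)/2), g^(n/2)]
    ∨ (∃ i, 1 ≤ i ∧ i ≤ n/2 - 1 ∧
        P * Pᴴ = Matrix.diagonal ![0, 0, g^(n/2 - i) * (1-g)^i])
    ∨ P * Pᴴ = Matrix.diagonal ![0, 0, (1-g)^(n/2)]) := by
  have hg0 : (0:ℝ) ≤ g := hg.1
  have hg1 : (0:ℝ) ≤ 1 - g := by linarith [hg.2]
  have hx : ∀ m : ℕ, Real.sqrt (1-g) ^ m * Real.sqrt (1-g) ^ m = (1-g)^m := by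
    intro m; rw [← pow_two, pow_sq_u g hg1]
  have hy : ∀ m : ℕ, (-Real.sqrt g) ^ m * (-Real.sqrt g) ^ m = g^m := by
    intro m; rw [← pow_two, pow_sq_v g hg0]
  cases h with
  | zero n =>
      have hP : (0 : Matrix (Fin 3) (Fin 3) ℝ) * (0 : Matrix (Fin 3) (Fin 3) ℝ)ᴴ = 0 := by
        simp
      exact ⟨by rw [hP]; exact Matrix.isDiag_zero, Or.inl hP⟩
  | id => exact absurd hn (by omega)
  | Aeven n hk h0 =>
      have hk2 : n % 2 = 0 := Nat.even_iff.mp hk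
      have hP : (sm 0 0 (Real.sqrt (1-g) ^ (n/2)) + sm 1 1 ((-Real.sqrt g) ^ (n/2))) *
          (sm 0 0 (Real.sqrt (1-g) ^ (n/2)) + sm 1 1 ((-Real.sqrt g) ^ (n/2)))ᴴ
          = Matrix.diagonal ![(1-g)^(n/2), g^(n/2), 0] := by
        rw [two_mul_conj 0 0 1 1 (by decide), hx, hy, sm_add_diag01]
      refine ⟨by rw [hP]; exact Matrix.isDiag_diagonal _,
        Or.inr (Or.inr (Or.inr (Or.inl ?_)))⟩
      rw [hP, show (n+1)/2 = n/2 by omega]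
  | Aodd n hk =>
      have hP : (sm 1 0 (Real.sqrt (1-g) ^ ((n+1)/2)) + sm 2 1 ((-Real.sqrt g) ^ (n/2))) *
          (sm 1 0 (Real.sqrt (1-g) ^ ((n+1)/2)) + sm 2 1 ((-Real.sqrt g) ^ (n/2)))ᴴ
          = Matrix.diagonal ![0, (1-g)^((n+1)/2), g^(n/2)] := by
        rw [two_mul_conj 1 0 2 1 (by decide), hx, hy, sm_add_diag12]
      exact ⟨by rw [hP]; exact Matrix.isDiag_diagonal _,
        Or.inr (Or.inr (Or.inr (Or.inr (Or.inr (Or.inl hP)))))⟩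
  | Beven n hk h0 =>
      have hk2 : n % 2 = 0 := Nat.even_iff.mp hk
      have hP : (sm 1 1 (Real.sqrt (1-g) ^ (n/2)) + sm 2 2 ((-Real.sqrt g) ^ (n/2))) *
          (sm 1 1 (Real.sqrt (1-g) ^ (n/2)) + sm 2 2 ((-Real.sqrt g) ^ (n/2)))ᴴ
          = Matrix.diagonal ![0, (1-g)^(n/2), g^(n/2)] := by
        rw [two_mul_conj 1 1 2 2 (by decide), hx, hy, sm_add_diag12]
      refine ⟨by rw [hP]; exact Matrix.isDiag_diagonal _,
        Or.inr (Or.inr (Or.inr (Or.inr (Or.inr (Or.inl ?_)))))⟩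
      rw [hP, show (n+1)/2 = n/2 by omega]
  | Bodd n hk =>
      have hP : (sm 0 1 (Real.sqrt (1-g) ^ (n/2)) + sm 1 2 ((-Real.sqrt g) ^ ((n+1)/2))) *
          (sm 0 1 (Real.sqrt (1-g) ^ (n/2)) + sm 1 2 ((-Real.sqrt g) ^ ((n+1)/2)))ᴴ
          = Matrix.diagonal ![(1-g)^(n/2), g^((n+1)/2), 0] := by
        rw [two_mul_conj 0 1 1 2 (by decide), hx, hy, sm_add_diag01]
      exact ⟨by rw [hP]; exact Matrix.isDiag_diagonal _,
        Or.inr (Or.inr (Or.inr (Or.inl hP)))⟩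
  | single n r j c a b hc h1 h2 h3 h4 h5 =>
      have hcc : c * c = g^a * (1-g)^b := by rw [← pow_two]; exact hc
      have hP0 : sm r j c * (sm r j c)ᴴ = sm r r (g^a * (1-g)^b) := by
        rw [single_mul_conj, hcc]
      rcases fin3_cases r with hr | hr | hr <;> subst hr
      · have ht : a + b = n/2 := h2 (by decide)
        have ha : 1 ≤ a := h3 rfl
        have hP : sm 0 j c * (sm 0 j c)ᴴ = Matrix.diagonal ![g^a * (1-g)^b, 0, 0] := by
          rw [hP0, sm_diag0]
        refine ⟨by rw [hP]; exact Matrix.isDiag_diagonal _, ?_⟩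
        by_cases hb : b = 0
        · refine Or.inr (Or.inl ?_)
          rw [hP, hb, show a = n/2 by omega]
          norm_num
        · exact Or.inr (Or.inr (Or.inl ⟨a, ha, by omega,
            by rw [hP, show n/2 - a = b by omega]⟩))
      · obtain ⟨ht, ha, hb⟩ := h1 rfl
        have hP : sm 1 j c * (sm 1 j c)ᴴ = Matrix.diagonal ![0, g^a * (1-g)^b, 0] := by
          rw [hP0, sm_diag1]
        refine ⟨by rw [hP]; exact Matrix.isDiag_diagonal _,
          Or.inr (Or.inr (Or.inr (Or.inr (Or.inl ⟨a, ha, by omega,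
            by rw [hP, show (n+1)/2 - a = b by omega]⟩))))⟩
      · have ht : a + b = n/2 := h2 (by decide)
        have hb : 1 ≤ b := h4 rfl
        have hP : sm 2 j c * (sm 2 j c)ᴴ = Matrix.diagonal ![0, 0, g^a * (1-g)^b] := by
          rw [hP0, sm_diag2]
        refine ⟨by rw [hP]; exact Matrix.isDiag_diagonal _, ?_⟩
        by_cases ha : a = 0
        · refine Or.inr (Or.inr (Or.inr (Or.inr (Or.inr (Or.inr (Or.inr ?_))))))
          rw [hP, ha, show b = n/2 by omega]
          norm_num
        · exact Or.inr (Or.inr (Or.inr (Or.inr (Or.inr (Or.inr (Or.inl ⟨b, hb, by omega,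
            by rw [hP, show n/2 - b = a by omega]⟩))))))

/-- For `n ≥ 4` and any word over the Majumdar–Ghosh operators, the matrix
`O1⋯On·On†⋯O1†` is diagonal and belongs to the explicit finite set of the lemma
(with `⌊n/2⌋ = n/2` and `⌈n/2⌉ = (n+1)/2` in natural-number division). -/
theorem mg_products_diagonal (g : ℝ) (hg : g ∈ Set.Ico (0:ℝ) 1) (n : ℕ) (hn : 4 ≤ n)
    (O : Fin n → Matrix (Fin 3) (Fin 3) ℝ) (hO : ∀ i, O i = B1 g ∨ O i = B2 g) :
    ((List.ofFn O).prod * ((List.ofFn O).prod)ᴴ).IsDiag ∧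
    ((List.ofFn O).prod * ((List.ofFn O).prod)ᴴ = 0
    ∨ (List.ofFn O).prod * ((List.ofFn O).prod)ᴴ = Matrix.diagonal ![g^(n/2), 0, 0]
    ∨ (∃ i, 1 ≤ i ∧ i ≤ n/2 - 1 ∧
        (List.ofFn O).prod * ((List.ofFn O).prod)ᴴ
          = Matrix.diagonal ![g^i * (1-g)^(n/2 - i), 0, 0])
    ∨ (List.ofFn O).prod * ((List.ofFn O).prod)ᴴ
          = Matrix.diagonal ![(1-g)^(n/2), g^((n+1)/2), 0]
    ∨ (∃ i, 1 ≤ i ∧ i ≤ (n+1)/2 - 1 ∧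
        (List.ofFn O).prod * ((List.ofFn O).prod)ᴴ
          = Matrix.diagonal ![0, g^i * (1-g)^((n+1)/2 - i), 0])
    ∨ (List.ofFn O).prod * ((List.ofFn O).prod)ᴴ
          = Matrix.diagonal ![0, (1-g)^((n+1)/2), g^(n/2)]
    ∨ (∃ i, 1 ≤ i ∧ i ≤ n/2 - 1 ∧
        (List.ofFn O).prod * ((List.ofFn O).prod)ᴴ
          = Matrix.diagonal ![0, 0, g^(n/2 - i) * (1-g)^i])
    ∨ (List.ofFn O).prod * ((List.ofFn O).prod)ᴴ
          = Matrix.diagonal ![0, 0, (1-g)^(n/2)]) := by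
  
  have h := inv_prod hg (List.ofFn O) (by
    intro A hA
    rw [List.mem_ofFn] at hA
    obtain ⟨i, rfl⟩ := hA
    exact hO i)
  rw [List.length_ofFn] at h
  exact final g hg n hn _ h
end

section
/- Let z_n satisfy z_{n+1} = 2z_n + b_n + Σ_{i=1}^{⌊n/2⌋−1} c_n(i) + Σ_{i=1}^{⌊n/2⌋−1} g_n(i) + h_n for n ≥ 4, where b_n = h_n = 1, c_n(i) = g_n(i) = C(⌊n/2⌋, i), and z_4 = 6. Then z_n = 2^n − 2^{⌊n/2⌋+1} − 2^{⌈n/2⌉} + 2 for all n ≥ 4. -/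
open Finset

theorem sum_Icc_one_choose_eq_two_pow_sub_two {m : ℕ} (hm : 1 ≤ m) :
    ∑ i ∈ Icc 1 (m - 1), (m.choose i : ℤ) = 2 ^ m - 2 := by
  obtain ⟨k, rfl⟩ := Nat.exists_eq_add_of_le' hm
  have hrow : ∑ i ∈ range (k + 2), ((k + 1).choose i : ℤ) = 2 ^ (k + 1) := by
    exact_mod_cast Nat.sum_range_choose (k + 1)
  rw [sum_range_succ, sum_range_eq_add_Ico _ (by omega)] at hrow
  rw [Nat.add_sub_cancel, ← Ico_add_one_right_eq_Icc]
  simp only [Nat.choose_zero_right, Nat.choose_self, Nat.cast_one] at hrow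
  linarith

/-- The count `z_n` of Majumdar–Ghosh words whose product is the zero matrix:
`z_{n+1} = 2 z_n + b_n + Σ c_n(i) + Σ g_n(i) + h_n` with `b_n = h_n = 1`,
`c_n(i) = g_n(i) = C(⌊n/2⌋, i)`, `z_4 = 6`, gives
`z_n = 2^n − 2^{⌊n/2⌋+1} − 2^{⌈n/2⌉} + 2`. -/
theorem mg_multiplicity_z (z : ℕ → ℤ)
    (hz : ∀ n, 4 ≤ n → z (n+1) = 2 * z n + 1
      + (∑ i ∈ Finset.Icc 1 (n/2 - 1), ((n/2).choose i : ℤ))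
      + (∑ i ∈ Finset.Icc 1 (n/2 - 1), ((n/2).choose i : ℤ)) + 1)
    (iz : z 4 = 6) :
    ∀ n, 4 ≤ n → z n = 2^n - 2^(n/2 + 1) - 2^((n+1)/2) + 2 := by
  intro n hn
  induction n, hn using Nat.le_induction with
  | base => rw [iz]; norm_num
  | succ n hn ih =>
    rw [hz n hn, ih, sum_Icc_one_choose_eq_two_pow_sub_two (by omega),
      show (n + 1 + 1) / 2 = n / 2 + 1 by omega]
    ring
end

section
/- For g ∈ (0,1) and odd n, let k = ⌈n/2⌉ and consider the distribution with values μ_0 = ((1−g)^k + g^k)/2 with multiplicity 2, and μ_i = (1−g)^i g^{k−i}/2 with multiplicity 2·C(k, k−i) for 1 ≤ i ≤ k−1. Then as n → ∞ along odd integers, the Shannon entropy H_n of this distribution satisfies lim (1/n)·H_n = −(g/2)log₂ g − ((1−g)/2)log₂(1−g). -/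
open Real Filter Finset

lemma mg_sum_binom (p q : ℝ) (k : ℕ) :
    ∑ i ∈ range (k+1), (k.choose i : ℝ) * p^i * q^(k-i) = (p+q)^k := by
  rw [add_pow]
  exact Finset.sum_congr rfl fun i hi => by ring

lemma mg_sum_binom_mul (p q : ℝ) (k : ℕ) :
    ∑ i ∈ range (k+1), (i:ℝ) * (k.choose i : ℝ) * p^i * q^(k-i)
      = k * p * (p+q)^(k-1) := by
  cases k with
  | zero => simp
  | succ n =>
    rw [Finset.sum_range_succ']
    have h : ∀ i ∈ range (n+1),
        ((i+1:ℕ):ℝ) * ((n+1).choose (i+1) : ℝ) * p^(i+1) * q^(n+1-(i+1))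
          = ((n:ℝ)+1) * p * ((n.choose i : ℝ) * p^i * q^(n-i)) := by
      intro i hi
      have hc : (i+1) * (n+1).choose (i+1) = (n+1) * n.choose i := by
        rw [mul_comm (i+1), ← Nat.add_one_mul_choose_eq]
      have hc' : ((i+1:ℕ):ℝ) * ((n+1).choose (i+1) : ℝ) = ((n:ℝ)+1) * (n.choose i : ℝ) := by
        have := congrArg (Nat.cast : ℕ → ℝ) hc
        push_cast at this
        push_cast; linarith [this]
      have he : n + 1 - (i+1) = n - i := by omega
      rw [he, hc']
      ring
    rw [Finset.sum_congr rfl h]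
    rw [← Finset.mul_sum, mg_sum_binom]
    norm_num
lemma mg_Hm_eq (g : ℝ) (hg0 : 0 < g) (hg1 : g < 1) (m : ℕ) :
    -(2 * (((1-g)^(m+1) + g^(m+1))/2) * Real.logb 2 (((1-g)^(m+1) + g^(m+1))/2)
        + ∑ i ∈ Finset.Icc 1 m,
            2 * ((m+1).choose (m+1-i) : ℝ) * ((1-g)^i * g^(m+1-i)/2)
              * Real.logb 2 ((1-g)^i * g^(m+1-i)/2))
    = ((m:ℝ)+1) * (-((1-g) * Real.logb 2 (1-g) + g * Real.logb 2 g)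
          + g^(m+1) * Real.logb 2 g + (1-g)^(m+1) * Real.logb 2 (1-g))
      + (1 - (1-g)^(m+1) - g^(m+1))
      - ((1-g)^(m+1) + g^(m+1)) * Real.logb 2 (((1-g)^(m+1) + g^(m+1))/2) := by
  have hp0 : (0:ℝ) < 1 - g := by linarith
  set Lp := Real.logb 2 (1-g) with hLp
  set Lq := Real.logb 2 g with hLq
  set F : ℕ → ℝ := fun i =>
    ((m+1).choose i : ℝ) * (1-g)^i * g^(m+1-i)
      * ((i:ℝ) * Lp + ((m+1-i : ℕ):ℝ) * Lq - 1) with hF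
  -- termwise rewrite of the Icc sum
  have hterm : ∀ i ∈ Finset.Icc 1 m,
      2 * ((m+1).choose (m+1-i) : ℝ) * ((1-g)^i * g^(m+1-i)/2)
        * Real.logb 2 ((1-g)^i * g^(m+1-i)/2) = F i := by
    intro i hi
    simp only [Finset.mem_Icc] at hi
    have hile : i ≤ m + 1 := by omega
    have hcs : (m+1).choose (m+1-i) = (m+1).choose i := Nat.choose_symm hile
    have hppos : (0:ℝ) < (1-g)^i := pow_pos hp0 i
    have hqpos : (0:ℝ) < g^(m+1-i) := pow_pos hg0 _
    have hlog : Real.logb 2 ((1-g)^i * g^(m+1-i)/2)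
        = (i:ℝ) * Lp + ((m+1-i : ℕ):ℝ) * Lq - 1 := by
      rw [Real.logb_div (by positivity) (by norm_num),
        Real.logb_mul (ne_of_gt hppos) (ne_of_gt hqpos),
        Real.logb_pow, Real.logb_pow, Real.logb_self_eq_one (by norm_num)]
    rw [hcs, hlog, hF]
    ring
  rw [Finset.sum_congr rfl hterm]
  -- split range sum
  have hsplit : ∑ i ∈ Finset.range (m+2), F i
      = F 0 + (∑ i ∈ Finset.Icc 1 m, F i) + F (m+1) := by
    rw [Finset.sum_range_succ, Finset.sum_range_succ']
    have h2 : ∑ i ∈ Finset.Icc 1 m, F i = ∑ i ∈ Finset.range m, F (i+1) := by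
      rw [show Finset.Icc 1 m = Finset.Ico 1 (m+1) by rfl, Finset.sum_Ico_eq_sum_range]
      simp only [Nat.add_sub_cancel]
      exact Finset.sum_congr rfl fun i _ => by rw [add_comm]
    rw [h2]
    ring
  have hIcc : ∑ i ∈ Finset.Icc 1 m, F i
      = (∑ i ∈ Finset.range (m+2), F i) - F 0 - F (m+1) := by
    rw [hsplit]; ring
  -- evaluate full sum
  have hfull : ∑ i ∈ Finset.range (m+2), F i
      = ((m:ℝ)+1) * ((1-g) * Lp + g * Lq) - 1 := by
    have hexp : ∀ i ∈ Finset.range (m+2),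
        F i = Lp * ((i:ℝ) * ((m+1).choose i : ℝ) * (1-g)^i * g^(m+1-i))
            + ((m:ℝ)+1) * Lq * (((m+1).choose i : ℝ) * (1-g)^i * g^(m+1-i))
            - Lq * ((i:ℝ) * ((m+1).choose i : ℝ) * (1-g)^i * g^(m+1-i))
            - (((m+1).choose i : ℝ) * (1-g)^i * g^(m+1-i)) := by
      intro i hi
      simp only [Finset.mem_range] at hi
      have : ((m+1-i : ℕ):ℝ) = ((m:ℝ)+1) - (i:ℝ) := by
        have hile : i ≤ m+1 := by omega
        push_cast [Nat.cast_sub hile]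
        ring
      rw [hF]
      dsimp only
      rw [this]
      ring
    rw [Finset.sum_congr rfl hexp]
    have hsum1 := mg_sum_binom (1-g) g (m+1)
    have hsum2 := mg_sum_binom_mul (1-g) g (m+1)
    rw [show (1-g) + g = 1 by ring] at hsum1 hsum2
    simp only [one_pow] at hsum1 hsum2
    rw [Finset.sum_sub_distrib, Finset.sum_sub_distrib, Finset.sum_add_distrib,
      ← Finset.mul_sum, ← Finset.mul_sum, ← Finset.mul_sum]
    have e1 : ∑ i ∈ Finset.range (m+2), (i:ℝ) * ((m+1).choose i : ℝ) * (1-g)^i * g^(m+1-i)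
        = ((m:ℝ)+1) * (1-g) := by
      have := hsum2; push_cast at this ⊢; linarith
    have e2 : ∑ i ∈ Finset.range (m+2), ((m+1).choose i : ℝ) * (1-g)^i * g^(m+1-i) = 1 := by
      have := hsum1; push_cast at this ⊢; linarith
    rw [e1, e2]
    ring
  have hF0 : F 0 = g^(m+1) * (((m:ℝ)+1) * Lq - 1) := by
    rw [hF]; push_cast; simp
  have hFm : F (m+1) = (1-g)^(m+1) * (((m:ℝ)+1) * Lp - 1) := by
    rw [hF]; push_cast; simp
  rw [hIcc, hfull, hF0, hFm]
  ring
/-- Entropy rate of the Majumdar–Ghosh diagonal spectrum along odd `n = 2m+1`,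
with `k = ⌈n/2⌉ = m+1`: values `μ₀ = ((1−g)^k + g^k)/2` with multiplicity 2 and
`μ_i = (1−g)^i g^{k−i}/2` with multiplicity `2·C(k, k−i)` for `1 ≤ i ≤ k−1`. -/
theorem mg_entropy_rate_odd (g : ℝ) (hg : g ∈ Set.Ioo (0:ℝ) 1) :
    Tendsto (fun m : ℕ =>
      (-(2 * (((1-g)^(m+1) + g^(m+1))/2) * Real.logb 2 (((1-g)^(m+1) + g^(m+1))/2)
        + ∑ i ∈ Finset.Icc 1 m,
            2 * ((m+1).choose (m+1-i) : ℝ) * ((1-g)^i * g^(m+1-i)/2)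
              * Real.logb 2 ((1-g)^i * g^(m+1-i)/2))) / ((2*m+1 : ℕ) : ℝ))
      atTop
      (nhds (-(g/2) * Real.logb 2 g - ((1-g)/2) * Real.logb 2 (1-g))) := by
  obtain ⟨hg0, hg1⟩ := hg
  have hp0 : (0:ℝ) < 1 - g := by linarith
  -- denominator tends to atTop
  have hden : Tendsto (fun m : ℕ => ((2*m+1 : ℕ):ℝ)) atTop atTop := by
    apply tendsto_atTop_mono (f := fun m : ℕ => (m:ℝ)) (fun m => ?_)
      tendsto_natCast_atTop_atTop
    push_cast; linarith
  -- geometric terms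
  have h2 : Tendsto (fun m : ℕ => g^(m+1)) atTop (nhds 0) :=
    (tendsto_pow_atTop_nhds_zero_of_lt_one hg0.le hg1).comp (tendsto_add_atTop_nat 1)
  have hp2 : Tendsto (fun m : ℕ => (1-g)^(m+1)) atTop (nhds 0) :=
    (tendsto_pow_atTop_nhds_zero_of_lt_one hp0.le (by linarith)).comp (tendsto_add_atTop_nat 1)
  have hxpos : ∀ m : ℕ, (0:ℝ) < (1-g)^(m+1) + g^(m+1) := fun m => by positivity
  have hx0 : Tendsto (fun m : ℕ => (1-g)^(m+1) + g^(m+1)) atTop (nhds 0) := by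
    simpa using hp2.add h2
  -- x * log x → 0
  have hxlog : Tendsto (fun m : ℕ =>
      Real.log ((1-g)^(m+1) + g^(m+1)) * ((1-g)^(m+1) + g^(m+1))) atTop (nhds 0) := by
    have hcomp := (tendsto_log_mul_rpow_nhdsGT_zero zero_lt_one).comp
      (tendsto_nhdsWithin_iff.mpr ⟨hx0, Filter.Eventually.of_forall
        (fun m => Set.mem_Ioi.mpr (hxpos m))⟩)
    simpa [Function.comp_def, Real.rpow_one] using hcomp
  -- boundary entropy term → 0
  have hE : Tendsto (fun m : ℕ => ((1-g)^(m+1) + g^(m+1))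
      * Real.logb 2 (((1-g)^(m+1) + g^(m+1))/2)) atTop (nhds 0) := by
    have hrw : ∀ m : ℕ, ((1-g)^(m+1) + g^(m+1))
        * Real.logb 2 (((1-g)^(m+1) + g^(m+1))/2)
        = Real.log ((1-g)^(m+1) + g^(m+1)) * ((1-g)^(m+1) + g^(m+1)) * (Real.log 2)⁻¹
          - ((1-g)^(m+1) + g^(m+1)) := by
      intro m
      rw [Real.logb_div (ne_of_gt (hxpos m)) (by norm_num),
        Real.logb_self_eq_one (by norm_num), Real.logb]
      ring
    have := (hxlog.mul_const (Real.log 2)⁻¹).sub hx0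
    rw [show ((0:ℝ) * (Real.log 2)⁻¹ - 0) = 0 by ring] at this
    exact Tendsto.congr (fun m => (hrw m).symm) this
  -- remainder numerator → 1
  have hremnum : Tendsto (fun m : ℕ => (1 - (1-g)^(m+1) - g^(m+1))
      - ((1-g)^(m+1) + g^(m+1)) * Real.logb 2 (((1-g)^(m+1) + g^(m+1))/2))
      atTop (nhds 1) := by
    have := (((tendsto_const_nhds (x := (1:ℝ))).sub hp2).sub h2).sub hE
    simpa using this
  have hrem : Tendsto (fun m : ℕ => ((1 - (1-g)^(m+1) - g^(m+1))
      - ((1-g)^(m+1) + g^(m+1)) * Real.logb 2 (((1-g)^(m+1) + g^(m+1))/2))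
      / ((2*m+1 : ℕ):ℝ)) atTop (nhds 0) :=
    hremnum.div_atTop hden
  -- (m+1)/(2m+1) → 1/2
  have h1 : Tendsto (fun m : ℕ => ((m:ℝ)+1)/((2*m+1 : ℕ):ℝ)) atTop (nhds (1/2)) := by
    have heq : ∀ᶠ m : ℕ in atTop,
        (1 + 1/(m:ℝ))/(2 + 1/(m:ℝ)) = ((m:ℝ)+1)/((2*m+1 : ℕ):ℝ) := by
      filter_upwards [eventually_gt_atTop 0] with m hm
      have hm' : (0:ℝ) < m := by exact_mod_cast hm
      push_cast
      rw [div_eq_div_iff (by positivity) (by positivity)]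
      field_simp
      try ring
    have hlim : Tendsto (fun m : ℕ => (1 + 1/(m:ℝ))/(2 + 1/(m:ℝ))) atTop
        (nhds ((1+0)/(2+0))) :=
      (tendsto_const_nhds.add tendsto_one_div_atTop_nhds_zero_nat).div
        (tendsto_const_nhds.add tendsto_one_div_atTop_nhds_zero_nat) (by norm_num)
    rw [show ((1:ℝ)+0)/(2+0) = 1/2 by norm_num] at hlim
    exact hlim.congr' heq
  -- main coefficient
  have hA : Tendsto (fun m : ℕ => -((1-g) * Real.logb 2 (1-g) + g * Real.logb 2 g)
      + g^(m+1) * Real.logb 2 g + (1-g)^(m+1) * Real.logb 2 (1-g)) atTop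
      (nhds (-((1-g) * Real.logb 2 (1-g) + g * Real.logb 2 g))) := by
    have := ((tendsto_const_nhds (x := -((1-g) * Real.logb 2 (1-g) + g * Real.logb 2 g))).add
      (h2.mul_const (Real.logb 2 g))).add (hp2.mul_const (Real.logb 2 (1-g)))
    simpa using this
  have htot := (h1.mul hA).add hrem
  rw [add_zero] at htot
  have hval : (1/2 : ℝ) * (-((1-g) * Real.logb 2 (1-g) + g * Real.logb 2 g))
      = -(g/2) * Real.logb 2 g - ((1-g)/2) * Real.logb 2 (1-g) := by ring
  rw [hval] at htot
  refine htot.congr fun m => ?_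
  have hd : ((2*m+1 : ℕ):ℝ) ≠ 0 := by positivity
  rw [mg_Hm_eq g hg0 hg1 m]
  field_simp
  ring
end

section
/- The quantum capacity of the memory channel correlated by the parametrized Majumdar–Ghosh state equals Q = 1 + (g/2)log₂ g + ((1−g)/2)log₂(1−g) for g ∈ (0,1); i.e., with the diagonal spectrum of ρ_MG^{(n)} given in the MG spectrum lemma (both parities of n), lim_{n→∞} S(diag(ρ_MG^{(n)}))/n = −(g/2)log₂ g − ((1−g)/2)log₂(1−g). -/
/-!
Up to a few merged eigenvalues, the diagonal spectrum of `ρ_MG^{(n)}` is the law of a fair coin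
followed by `m` independent `g`-coins: `m = (n + 1) / 2` for odd `n`, and for even `n` the fair coin
chooses between `m = n / 2` and `m = n / 2 + 1`. By the first two binomial moments this law has
entropy exactly `1 + (n + 1)/2 · h(g)` in bits, with `h` the binary entropy.
The merged eigenvalues are `(x^m + y^k)/2` with `x, y < 1`, and merging changes the entropy by a
`mergeDefect` that tends to `0` because `t log t` is continuous at `0`. Hence
`S_n = (n + 1)/2 · h(g) + 1 + o(1)` and `S_n / n → h(g)/2`.
-/

open Real Filter Finset

/-- Shannon entropy (in bits) of the diagonal spectrum of the Majumdar–Ghosh local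
density matrix `ρ_MG^{(n)}`, for odd and even `n` (here `⌈n/2⌉ = (n+1)/2` in ℕ). -/
noncomputable def mgDiagEntropy (g : ℝ) (n : ℕ) : ℝ :=
  if Odd n then
    -(2 * (((1-g)^((n+1)/2) + g^((n+1)/2))/2)
        * Real.logb 2 (((1-g)^((n+1)/2) + g^((n+1)/2))/2)
      + ∑ i ∈ Finset.Icc 1 ((n+1)/2 - 1),
          2 * (((n+1)/2).choose ((n+1)/2 - i) : ℝ) * ((1-g)^i * g^((n+1)/2 - i)/2)
            * Real.logb 2 ((1-g)^i * g^((n+1)/2 - i)/2))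
  else
    -((((1-g)^(n/2) + g^(n/2 + 1))/2) * Real.logb 2 (((1-g)^(n/2) + g^(n/2 + 1))/2)
      + ∑ i ∈ Finset.Icc 1 (n/2 - 1),
          ((n/2).choose i : ℝ) * (g^i * (1-g)^(n/2 - i)/2)
            * Real.logb 2 (g^i * (1-g)^(n/2 - i)/2)
      + ∑ i ∈ Finset.Icc 1 (n/2),
          ((n/2 + 1).choose i : ℝ) * (g^(n/2 - i + 1) * (1-g)^i/2)
            * Real.logb 2 (g^(n/2 - i + 1) * (1-g)^i/2)
      + (((1-g)^(n/2 + 1) + g^(n/2))/2) * Real.logb 2 (((1-g)^(n/2 + 1) + g^(n/2))/2))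

open scoped Topology

noncomputable def halfMulLogb (x : ℝ) : ℝ := x / 2 * logb 2 (x / 2)

theorem continuous_halfMulLogb : Continuous halfMulLogb := by
  have h : halfMulLogb = fun x => x / 2 * log (x / 2) / log 2 := by
    funext x; simp only [halfMulLogb, logb]; ring
  rw [h]
  exact (continuous_mul_log.comp (continuous_id.div_const 2)).div_const _

theorem halfMulLogb_zero : halfMulLogb 0 = 0 := by simp [halfMulLogb]

theorem sum_range_choose_mul_pow_mul_pow {a b : ℝ} (hab : a + b = 1) (m : ℕ) :
    ∑ i ∈ range (m + 1), (m.choose i : ℝ) * (a ^ i * b ^ (m - i)) = 1 := by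
  calc _ = (a + b) ^ m := by rw [add_pow]; exact sum_congr rfl fun i _ => by ring
    _ = 1 := by rw [hab, one_pow]

theorem sum_range_mul_choose_mul_pow_mul_pow {a b : ℝ} (hab : a + b = 1) (m : ℕ) :
    ∑ i ∈ range (m + 1), (i : ℝ) * (m.choose i * (a ^ i * b ^ (m - i))) = m * a := by
  have h := congrArg (Polynomial.eval a) (bernsteinPolynomial.sum_smul ℝ m)
  obtain rfl : b = 1 - a := by linarith
  simpa [Polynomial.eval_finsetSum, bernsteinPolynomial, mul_assoc] using h

theorem sum_range_choose_mul_halfMulLogb {a b : ℝ} (ha : 0 < a) (hb : 0 < b) (hab : a + b = 1)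
    (m : ℕ) :
    ∑ i ∈ range (m + 1), (m.choose i : ℝ) * halfMulLogb (a ^ i * b ^ (m - i))
      = (m * (a * logb 2 a + b * logb 2 b) - 1) / 2 := by
  have hlog : ∀ i ∈ range (m + 1), (m.choose i : ℝ) * halfMulLogb (a ^ i * b ^ (m - i))
      = (logb 2 a - logb 2 b) / 2 * ((i : ℝ) * (m.choose i * (a ^ i * b ^ (m - i))))
        + (m * logb 2 b - 1) / 2 * (m.choose i * (a ^ i * b ^ (m - i))) := by
    intro i hi
    have hi : i ≤ m := Nat.lt_succ_iff.mp (mem_range.mp hi)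
    rw [halfMulLogb, logb_div (by positivity) two_ne_zero, logb_mul (by positivity) (by positivity),
      logb_pow, logb_pow, logb_self_eq_one one_lt_two, Nat.cast_sub hi]
    ring
  rw [sum_congr rfl hlog, sum_add_distrib, ← mul_sum, ← mul_sum,
    sum_range_mul_choose_mul_pow_mul_pow hab, sum_range_choose_mul_pow_mul_pow hab]
  linear_combination (-(m * logb 2 b) / 2) * hab

theorem sum_range_succ_eq_add_sum_Icc_add {M : Type*} [AddCommMonoid M] (f : ℕ → M) {m : ℕ}
    (hm : 1 ≤ m) : ∑ i ∈ range (m + 1), f i = f 0 + ∑ i ∈ Icc 1 (m - 1), f i + f m := by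
  obtain ⟨k, rfl⟩ : ∃ k, m = k + 1 := ⟨m - 1, by omega⟩
  rw [sum_range_eq_add_Ico f (Nat.succ_pos _), Nat.succ_eq_add_one, Ico_add_one_right_eq_Icc,
    sum_Icc_succ_top (by omega), Nat.add_sub_cancel, add_assoc]

theorem sum_Icc_choose_mul_halfMulLogb {a b : ℝ} (ha : 0 < a) (hb : 0 < b) (hab : a + b = 1)
    {m : ℕ} (hm : 1 ≤ m) :
    ∑ i ∈ Icc 1 (m - 1), (m.choose i : ℝ) * halfMulLogb (a ^ i * b ^ (m - i))
      = (m * (a * logb 2 a + b * logb 2 b) - 1) / 2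
        - halfMulLogb (b ^ m) - halfMulLogb (a ^ m) := by
  have h := sum_range_choose_mul_halfMulLogb ha hb hab m
  rw [sum_range_succ_eq_add_sum_Icc_add _ hm] at h
  simp only [Nat.choose_zero_right, Nat.choose_self, Nat.cast_one, one_mul, pow_zero, Nat.sub_zero,
    Nat.sub_self, mul_one] at h
  linarith

noncomputable def mergeDefect (x y : ℝ) : ℝ :=
  halfMulLogb (x + y) - halfMulLogb x - halfMulLogb y

theorem tendsto_mergeDefect {α : Type*} {l : Filter α} {x y : α → ℝ}
    (hx : Tendsto x l (𝓝 0)) (hy : Tendsto y l (𝓝 0)) :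
    Tendsto (fun t => mergeDefect (x t) (y t)) l (𝓝 0) := by
  have h : ∀ {z : α → ℝ}, Tendsto z l (𝓝 0) →
      Tendsto (fun t => halfMulLogb (z t)) l (𝓝 0) :=
    fun hz => halfMulLogb_zero ▸ (continuous_halfMulLogb.tendsto 0).comp hz
  simpa [mergeDefect] using ((h (by simpa using hx.add hy)).sub (h hx)).sub (h hy)

theorem mgDiagEntropy_of_odd {g : ℝ} (hg : g ∈ Set.Ioo (0 : ℝ) 1) {n : ℕ} (hn : Odd n) :
    mgDiagEntropy g n = ((n : ℝ) + 1) / 2 * -(g * logb 2 g + (1 - g) * logb 2 (1 - g)) + 1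
      - 2 * mergeDefect ((1 - g) ^ ((n + 1) / 2)) (g ^ ((n + 1) / 2)) := by
  obtain ⟨k, rfl⟩ := hn
  rw [mgDiagEntropy, if_pos ⟨k, rfl⟩, show (2 * k + 1 + 1) / 2 = k + 1 by omega]
  have hb : 0 < 1 - g := sub_pos.2 hg.2
  have hsum : ∑ i ∈ Icc 1 (k + 1 - 1), 2 * ((k + 1).choose (k + 1 - i) : ℝ)
        * ((1 - g) ^ i * g ^ (k + 1 - i) / 2) * logb 2 ((1 - g) ^ i * g ^ (k + 1 - i) / 2)
      = 2 * ∑ i ∈ Icc 1 (k + 1 - 1),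
          ((k + 1).choose i : ℝ) * halfMulLogb ((1 - g) ^ i * g ^ (k + 1 - i)) := by
    rw [mul_sum]
    refine sum_congr rfl fun i hi => ?_
    rw [Nat.choose_symm (by simp at hi; omega), halfMulLogb]
    ring
  rw [hsum, sum_Icc_choose_mul_halfMulLogb hb hg.1 (sub_add_cancel 1 g) (by omega),
    mergeDefect]
  simp only [halfMulLogb]
  push_cast
  ring

theorem mgDiagEntropy_of_even {g : ℝ} (hg : g ∈ Set.Ioo (0 : ℝ) 1) {n : ℕ} (hn : Even n)
    (hn0 : n ≠ 0) :
    mgDiagEntropy g n = ((n : ℝ) + 1) / 2 * -(g * logb 2 g + (1 - g) * logb 2 (1 - g)) + 1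
      - mergeDefect ((1 - g) ^ (n / 2)) (g ^ (n / 2 + 1))
      - mergeDefect ((1 - g) ^ (n / 2 + 1)) (g ^ (n / 2)) := by
  obtain ⟨k, rfl⟩ := hn
  rw [mgDiagEntropy, if_neg (Nat.not_odd_iff_even.2 ⟨k, rfl⟩), show (k + k) / 2 = k by omega]
  have hb : 0 < 1 - g := sub_pos.2 hg.2
  have hsum_succ : ∑ i ∈ Icc 1 k, ((k + 1).choose i : ℝ) * (g ^ (k - i + 1) * (1 - g) ^ i / 2)
        * logb 2 (g ^ (k - i + 1) * (1 - g) ^ i / 2)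
      = ∑ i ∈ Icc 1 (k + 1 - 1),
          ((k + 1).choose i : ℝ) * halfMulLogb ((1 - g) ^ i * g ^ (k + 1 - i)) := by
    refine sum_congr rfl fun i hi => ?_
    rw [show k - i + 1 = k + 1 - i by simp at hi; omega, halfMulLogb, mul_comm ((1 - g) ^ i)]
    ring
  have hsum : ∑ i ∈ Icc 1 (k - 1), (k.choose i : ℝ) * (g ^ i * (1 - g) ^ (k - i) / 2)
        * logb 2 (g ^ i * (1 - g) ^ (k - i) / 2)
      = ∑ i ∈ Icc 1 (k - 1), (k.choose i : ℝ) * halfMulLogb (g ^ i * (1 - g) ^ (k - i)) :=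
    sum_congr rfl fun i _ => by rw [halfMulLogb]; ring
  rw [hsum_succ, hsum, sum_Icc_choose_mul_halfMulLogb hb hg.1 (sub_add_cancel 1 g) (by omega),
    sum_Icc_choose_mul_halfMulLogb hg.1 hb (add_sub_cancel g 1) (by omega),
    mergeDefect, mergeDefect]
  simp only [halfMulLogb]
  push_cast
  ring

noncomputable def mgCorrection (g : ℝ) (n : ℕ) : ℝ :=
  if Odd n then 2 * mergeDefect ((1 - g) ^ ((n + 1) / 2)) (g ^ ((n + 1) / 2))
  else mergeDefect ((1 - g) ^ (n / 2)) (g ^ (n / 2 + 1))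
    + mergeDefect ((1 - g) ^ (n / 2 + 1)) (g ^ (n / 2))

theorem mgDiagEntropy_eq {g : ℝ} (hg : g ∈ Set.Ioo (0 : ℝ) 1) {n : ℕ} (hn : n ≠ 0) :
    mgDiagEntropy g n = ((n : ℝ) + 1) / 2 * -(g * logb 2 g + (1 - g) * logb 2 (1 - g)) + 1
      - mgCorrection g n := by
  rw [mgCorrection]
  split_ifs with hodd
  · exact mgDiagEntropy_of_odd hg hodd
  · rw [mgDiagEntropy_of_even hg (Nat.not_odd_iff_even.1 hodd) hn]
    ring

theorem tendsto_mgCorrection {g : ℝ} (hg : g ∈ Set.Ioo (0 : ℝ) 1) :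
    Tendsto (mgCorrection g) atTop (𝓝 0) := by
  have hpow : ∀ {x : ℝ}, 0 ≤ x → x < 1 → ∀ k : ℕ → ℕ, Tendsto k atTop atTop →
      Tendsto (fun n => x ^ k n) atTop (𝓝 0) :=
    fun h0 h1 _ hk => (tendsto_pow_atTop_nhds_zero_of_lt_one h0 h1).comp hk
  have hpow_one_sub := hpow (sub_nonneg.2 hg.2.le) (sub_lt_self 1 hg.1)
  have hpow_g := hpow hg.1.le hg.2
  have hhalf : Tendsto (· / 2) atTop atTop := Nat.tendsto_div_const_atTop two_ne_zero
  have hhalf_succ : Tendsto (fun n => (n + 1) / 2) atTop atTop :=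
    hhalf.comp (tendsto_add_atTop_nat 1)
  have hsucc_half : Tendsto (fun n => n / 2 + 1) atTop atTop :=
    (tendsto_add_atTop_nat 1).comp hhalf
  refine Tendsto.if (Tendsto.mono_left ?_ inf_le_left) (Tendsto.mono_left ?_ inf_le_left)
  · simpa using (tendsto_mergeDefect (hpow_one_sub _ hhalf_succ) (hpow_g _ hhalf_succ)).const_mul 2
  · simpa using (tendsto_mergeDefect (hpow_one_sub _ hhalf) (hpow_g _ hsucc_half)).add
      (tendsto_mergeDefect (hpow_one_sub _ hsucc_half) (hpow_g _ hhalf))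

/-- The quantum capacity of the channel correlated by the parametrized Majumdar–Ghosh
state is `Q = log₂ 2 − lim S/n = 1 + (g/2)log₂ g + ((1−g)/2)log₂(1−g)`; equivalently the
diagonal entropy rate is `−(g/2)log₂ g − ((1−g)/2)log₂(1−g)`. -/
theorem mg_capacity (g : ℝ) (hg : g ∈ Set.Ioo (0:ℝ) 1) :
    Tendsto (fun n : ℕ => mgDiagEntropy g n / n) atTop
      (nhds (-(g/2) * Real.logb 2 g - ((1-g)/2) * Real.logb 2 (1-g))) := by
  set H := -(g * logb 2 g + (1 - g) * logb 2 (1 - g))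
  have hrest : Tendsto (fun n : ℕ => (H / 2 + 1 - mgCorrection g n) / n) atTop (𝓝 0) :=
    (tendsto_const_nhds.sub (tendsto_mgCorrection hg)).div_atTop tendsto_natCast_atTop_atTop
  rw [show -(g / 2) * logb 2 g - ((1 - g) / 2) * logb 2 (1 - g) = H / 2 + 0 by ring]
  refine (tendsto_const_nhds.add hrest).congr' ?_
  filter_upwards [eventually_ne_atTop 0] with n hn
  rw [mgDiagEntropy_eq hg hn]
  field_simp
  ring
end
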